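/- For every n ∈ ℕ, the n-th Hermite function e_n(x) = He_n(√2·x)·exp(−x²/2) is twice differentiable on ℝ and satisfies the harmonic oscillator eigenvalue equation −e_n''(x) + x²·e_n(x) = (2n+1)·e_n(x) for every x ∈ ℝ. -/

import Mathlib

/-!
Conjugating by the Gaussian turns the oscillator into the Hermite operator: for
`f = u · exp (-x² / 2)` one has `-f'' + x² f = (-u'' + 2 x u' + u) · exp (-x² / 2)`.
With `u(x) = He_n(√2 x)` the bracket equals `(2n + 1) u` by Hermite's differential equation
`He_n'' = X He_n' - n He_n`, which follows from `He_{n+1}' = (n + 1) He_n`.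
-/

noncomputable def hermiteFun (n : ℕ) (x : ℝ) : ℝ :=
  Polynomial.aeval (Real.sqrt 2 * x) (Polynomial.hermite n) * Real.exp (-x ^ 2 / 2)

open Polynomial Real

namespace Polynomial

theorem derivative_hermite_succ (n : ℕ) :
    derivative (hermite (n + 1)) = ((n + 1 : ℕ) : ℤ[X]) * hermite n := by
  induction n with
  | zero => simp
  | succ n ih =>
    rw [hermite_succ (n + 1), derivative_sub, derivative_mul, derivative_X, ih,
      derivative_natCast_mul, hermite_succ n]
    push_cast
    ring

theorem derivative_derivative_hermite (n : ℕ) :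
    derivative (derivative (hermite n)) =
      X * derivative (hermite n) - (n : ℤ[X]) * hermite n := by
  cases n with
  | zero => simp
  | succ n =>
    rw [derivative_hermite_succ, derivative_natCast_mul, hermite_succ n]
    push_cast
    ring

theorem hasDerivAt_aeval_const_mul {R 𝕜 : Type*} [CommSemiring R] [NontriviallyNormedField 𝕜]
    [Algebra R 𝕜] (q : R[X]) (c x : 𝕜) :
    HasDerivAt (fun y => aeval (c * y) q) (c * aeval (c * x) (derivative q)) x := by
  simpa [Function.comp_def, mul_comm] using
    (q.hasDerivAt_aeval (c * x)).comp x ((hasDerivAt_id x).const_mul c)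

end Polynomial

theorem HasDerivAt.mul_gaussian {u : ℝ → ℝ} {d x : ℝ} (hu : HasDerivAt u d x) :
    HasDerivAt (fun y => u y * Real.exp (-y ^ 2 / 2))
      ((d - x * u x) * Real.exp (-x ^ 2 / 2)) x := by
  have hexp : HasDerivAt (fun y => Real.exp (-y ^ 2 / 2)) (-x * Real.exp (-x ^ 2 / 2)) x := by
    convert ((hasDerivAt_pow 2 x).fun_neg.div_const 2).exp using 1
    push_cast
    ring
  exact (hu.mul hexp).congr_deriv (by ring)

section GaussianFactor

variable {u u' u'' : ℝ → ℝ}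

theorem deriv_mul_gaussian (hu : ∀ x, HasDerivAt u (u' x) x) :
    deriv (fun y => u y * exp (-y ^ 2 / 2)) = fun x => (u' x - x * u x) * exp (-x ^ 2 / 2) :=
  funext fun x => (hu x).mul_gaussian.deriv

theorem hasDerivAt_deriv_mul_gaussian (hu : ∀ x, HasDerivAt u (u' x) x)
    (hu' : ∀ x, HasDerivAt u' (u'' x) x) (x : ℝ) :
    HasDerivAt (deriv fun y => u y * exp (-y ^ 2 / 2))
      ((u'' x - 2 * x * u' x + (x ^ 2 - 1) * u x) * exp (-x ^ 2 / 2)) x := by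
  rw [deriv_mul_gaussian hu]
  convert ((hu' x).fun_sub ((hasDerivAt_id' x).fun_mul (hu x))).mul_gaussian using 1
  ring

end GaussianFactor

/-- The `n`-th Hermite function is twice differentiable and satisfies the harmonic
oscillator eigenvalue equation `-e_n'' + x² e_n = (2n+1) e_n`. -/
theorem hermiteFun_harmonic_oscillator (n : ℕ) :
    (∀ x : ℝ, DifferentiableAt ℝ (hermiteFun n) x) ∧
    (∀ x : ℝ, DifferentiableAt ℝ (deriv (hermiteFun n)) x) ∧
    (∀ x : ℝ, -(deriv (deriv (hermiteFun n)) x) + x ^ 2 * hermiteFun n x =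
      (2 * (n : ℝ) + 1) * hermiteFun n x) := by
  have hu := hasDerivAt_aeval_const_mul (hermite n) √2
  have hu' (x : ℝ) := (hasDerivAt_aeval_const_mul (derivative (hermite n)) √2 x).const_mul √2
  have h1 (x : ℝ) : HasDerivAt (hermiteFun n) _ x := (hu x).mul_gaussian
  have h2 (x : ℝ) : HasDerivAt (deriv (hermiteFun n)) _ x :=
    hasDerivAt_deriv_mul_gaussian hu hu' x
  refine ⟨fun x => (h1 x).differentiableAt, fun x => (h2 x).differentiableAt, fun x => ?_⟩
  have hode := congrArg (aeval (√2 * x)) (derivative_derivative_hermite n)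
  simp only [map_sub, map_mul, aeval_X, map_natCast] at hode
  have hsqrt : √2 * √2 = 2 := mul_self_sqrt zero_le_two
  rw [(h2 x).deriv, hermiteFun, hode]
  linear_combination (n * aeval (√2 * x) (hermite n) -
    x * √2 * aeval (√2 * x) (derivative (hermite n))) * exp (-x ^ 2 / 2) * hsqrt
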